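/- Helly's selection theorem (first part): Let {f_n} be a sequence of functions on [0, τ] such that ‖f_n‖_∞ ≤ A₁ and sup_n V(f_n) ≤ A₂ for finite constants A₁, A₂. Then there exists a subsequence {f_{n_j}} converging pointwise to some function f. -/

import Mathlib

/-!
A function of bounded variation is the difference of two monotone functions (its variation
from a base point `a`, and that variation minus the function), so it suffices to treat bounded
monotone sequences. For those, a diagonal extraction gives convergence at every rational, to a
monotone limit `g`. Its left supremum `G t = ⨆_{q < t} g q` is monotone, and the sequence converges
to `G t` wherever `G` is continuous, by squeezing `u n t` between `u n q` and `u n r` for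
rationals `q < t < r`. `G` has only countably many discontinuities, and a second diagonal
extraction takes care of them.
-/

open Filter Topology Set
open scoped ENNReal

theorem Set.Countable.exists_subseq_tendsto {α : Type*} {S : Set α} (hS : S.Countable)
    (u : ℕ → α → ℝ) (M : α → ℝ) (hM : ∀ n, ∀ t ∈ S, |u n t| ≤ M t) :
    ∃ φ : ℕ → ℕ, StrictMono φ ∧ ∀ t ∈ S, ∃ l, Tendsto (fun j => u (φ j) t) atTop (𝓝 l) := by
  have : Countable S := hS.to_subtype
  obtain ⟨a, -, φ, hφ, ha⟩ :=
    (isCompact_univ_pi fun t : S => isCompact_Icc (a := -M t) (b := M t)).tendsto_subseq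
      (x := fun n (t : S) => u n t) fun n t _ => abs_le.1 (hM n t t.2)
  exact ⟨φ, hφ, fun t ht => ⟨a ⟨t, ht⟩, tendsto_pi_nhds.1 ha ⟨t, ht⟩⟩⟩

noncomputable def ratLeftSup (g : ℚ → ℝ) (t : ℝ) : ℝ :=
  ⨆ q : {q : ℚ // (q : ℝ) < t}, g q

section RatLeftSup

variable {g : ℚ → ℝ}

instance (t : ℝ) : Nonempty {q : ℚ // (q : ℝ) < t} :=
  let ⟨q, hq⟩ := exists_rat_lt t
  ⟨⟨q, hq⟩⟩

theorem le_ratLeftSup (hg : Monotone g) {q : ℚ} {t : ℝ} (hqt : (q : ℝ) < t) :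
    g q ≤ ratLeftSup g t := by
  obtain ⟨r, htr⟩ := exists_rat_gt t
  have hbdd : BddAbove (range fun q : {q : ℚ // (q : ℝ) < t} => g q) :=
    ⟨g r, forall_mem_range.2 fun q => hg (Rat.cast_le.1 (q.2.trans htr).le)⟩
  exact le_ciSup hbdd ⟨q, hqt⟩

theorem exists_lt_of_lt_ratLeftSup {a t : ℝ} (h : a < ratLeftSup g t) :
    ∃ q : ℚ, (q : ℝ) < t ∧ a < g q :=
  let ⟨q, hq⟩ := exists_lt_of_lt_ciSup h
  ⟨q, q.2, hq⟩

theorem monotone_ratLeftSup (hg : Monotone g) : Monotone (ratLeftSup g) := fun _ _ hst =>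
  ciSup_le fun q => le_ratLeftSup hg (q.2.trans_le hst)

theorem tendsto_ratLeftSup_of_continuousAt {u : ℕ → ℝ → ℝ} (hu : ∀ n, Monotone (u n))
    (hg_mono : Monotone g) (hg : ∀ q : ℚ, Tendsto (fun n => u n q) atTop (𝓝 (g q))) {t : ℝ}
    (ht : ContinuousAt (ratLeftSup g) t) :
    Tendsto (fun n => u n t) atTop (𝓝 (ratLeftSup g t)) := by
  refine tendsto_order.2 ⟨fun a ha => ?_, fun b hb => ?_⟩
  · obtain ⟨q, hqt, haq⟩ := exists_lt_of_lt_ratLeftSup ha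
    filter_upwards [(hg q).eventually (lt_mem_nhds haq)] with n hn
    exact hn.trans_le (hu n hqt.le)
  · obtain ⟨s, hsb, hts⟩ : ∃ s, ratLeftSup g s < b ∧ t < s :=
      (((ht.eventually (gt_mem_nhds hb)).filter_mono nhdsWithin_le_nhds).and
        (self_mem_nhdsWithin (s := Ioi t))).exists
    obtain ⟨q, htq, hqs⟩ := exists_rat_btwn hts
    filter_upwards [(hg q).eventually (gt_mem_nhds ((le_ratLeftSup hg_mono hqs).trans_lt hsb))]
      with n hn
    exact (hu n htq.le).trans_lt hn

end RatLeftSup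

theorem exists_subseq_tendsto_of_monotone {u : ℕ → ℝ → ℝ} (hu : ∀ n, Monotone (u n))
    (M : ℝ → ℝ) (hM : ∀ n t, |u n t| ≤ M t) :
    ∃ φ : ℕ → ℕ, StrictMono φ ∧ ∀ t, ∃ l, Tendsto (fun j => u (φ j) t) atTop (𝓝 l) := by
  obtain ⟨φ₁, hφ₁, hrat⟩ :=
    (countable_range ((↑) : ℚ → ℝ)).exists_subseq_tendsto u M fun n t _ => hM n t
  choose g hg using fun q : ℚ => hrat q (mem_range_self q)
  have hg_mono : Monotone g := fun q r hqr =>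
    le_of_tendsto_of_tendsto' (hg q) (hg r) fun j => hu _ (Rat.cast_le.2 hqr)
  obtain ⟨φ₂, hφ₂, hjump⟩ := (monotone_ratLeftSup hg_mono).countable_not_continuousAt
    |>.exists_subseq_tendsto (fun j => u (φ₁ j)) M fun n t _ => hM _ t
  refine ⟨φ₁ ∘ φ₂, hφ₁.comp hφ₂, fun t => ?_⟩
  by_cases ht : ContinuousAt (ratLeftSup g) t
  · exact ⟨_, (tendsto_ratLeftSup_of_continuousAt (fun j => hu (φ₁ j)) hg_mono hg ht).comp
      hφ₂.tendsto_atTop⟩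
  · exact hjump t ht

theorem exists_subseq_tendsto_of_monotoneOn {s : Set ℝ} {u : ℕ → ℝ → ℝ}
    (hu : ∀ n, MonotoneOn (u n) s) (M : ℝ) (hM : ∀ n, ∀ t ∈ s, |u n t| ≤ M) :
    ∃ φ : ℕ → ℕ, StrictMono φ ∧ ∀ t ∈ s, ∃ l, Tendsto (fun j => u (φ j) t) atTop (𝓝 l) := by
  have hext (n : ℕ) : ∃ v : ℝ → ℝ, Monotone v ∧ EqOn (u n) v s :=
    (hu n).exists_monotone_extension
      ⟨-M, forall_mem_image.2 fun t ht => (abs_le.1 (hM n t ht)).1⟩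
      ⟨M, forall_mem_image.2 fun t ht => (abs_le.1 (hM n t ht)).2⟩
  choose v hv_mono hv_eq using hext
  -- clamping to `[-M, M]` keeps the extensions monotone and bounded, and the values on `s` fixed
  have hclamp : ∀ n, ∀ t ∈ s, max (-M) (min M (v n t)) = u n t := fun n t ht => by
    rw [← hv_eq n ht, min_eq_right (abs_le.1 (hM n t ht)).2,
      max_eq_right (abs_le.1 (hM n t ht)).1]
  obtain ⟨φ, hφ, hconv⟩ :=
    exists_subseq_tendsto_of_monotone (u := fun n t => max (-M) (min M (v n t)))
      (fun n a b hab => max_le_max le_rfl (min_le_min le_rfl (hv_mono n hab))) (fun _ => |M|)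
      fun n t => abs_le.2 ⟨(neg_le_neg (le_abs_self M)).trans (le_max_left _ _),
        max_le (neg_le_abs M) ((min_le_left _ _).trans (le_abs_self M))⟩
  refine ⟨φ, hφ, fun t ht => ?_⟩
  simpa only [hclamp _ t ht] using hconv t

theorem exists_subseq_tendsto_of_eVariationOn_le {s : Set ℝ} {f : ℕ → ℝ → ℝ} (A : ℝ)
    (hA : ∀ n, ∀ t ∈ s, |f n t| ≤ A) {C : ℝ≥0∞} (hC : C ≠ ∞)
    (hV : ∀ n, eVariationOn (f n) s ≤ C) :
    ∃ φ : ℕ → ℕ, StrictMono φ ∧ ∀ t ∈ s, ∃ l, Tendsto (fun j => f (φ j) t) atTop (𝓝 l) := by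
  rcases s.eq_empty_or_nonempty with rfl | ⟨a, ha⟩
  · exact ⟨id, strictMono_id, by simp⟩
  have hbv (n : ℕ) : BoundedVariationOn (f n) s := ne_top_of_le_ne_top hC (hV n)
  set p : ℕ → ℝ → ℝ := fun n => variationOnFromTo (f n) s a
  have hp : ∀ n, ∀ t ∈ s, |p n t| ≤ C.toReal := fun n _ _ =>
    (variationOnFromTo.abs_le_eVariationOn (hbv n)).trans (ENNReal.toReal_mono hC (hV n))
  obtain ⟨φ, hφ, hpφ⟩ := exists_subseq_tendsto_of_monotoneOn
    (fun n => variationOnFromTo.monotoneOn (hbv n).locallyBoundedVariationOn ha) _ hp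
  obtain ⟨ψ, hψ, hqψ⟩ := exists_subseq_tendsto_of_monotoneOn (u := fun n => p (φ n) - f (φ n))
    (fun n => variationOnFromTo.sub_self_monotoneOn (hbv _).locallyBoundedVariationOn ha)
    (C.toReal + A) fun n t ht => (abs_sub _ _).trans (add_le_add (hp _ t ht) (hA _ t ht))
  refine ⟨φ ∘ ψ, hφ.comp hψ, fun t ht => ?_⟩
  obtain ⟨l₁, h₁⟩ := hpφ t ht
  obtain ⟨l₂, h₂⟩ := hqψ t ht
  exact ⟨l₁ - l₂, ((h₁.comp hψ.tendsto_atTop).sub h₂).congr fun _ => sub_sub_cancel _ _⟩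

/-- Helly's selection theorem (first part): a sequence of functions on `[0, τ]`
that is uniformly bounded by `A₁` and of uniformly bounded total variation `A₂`
admits a subsequence converging pointwise on `[0, τ]` to some function `f`. -/
theorem stmt_1 (τ A₁ A₂ : ℝ) (f : ℕ → ℝ → ℝ)
    (hbdd : ∀ n, ∀ t ∈ Set.Icc 0 τ, |f n t| ≤ A₁)
    (hvar : ∀ n, eVariationOn (f n) (Set.Icc 0 τ) ≤ ENNReal.ofReal A₂) :
    ∃ φ : ℕ → ℕ, StrictMono φ ∧ ∃ g : ℝ → ℝ,
      ∀ t ∈ Set.Icc 0 τ,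
        Filter.Tendsto (fun j => f (φ j) t) Filter.atTop (nhds (g t)) := by
  obtain ⟨φ, hφ, hconv⟩ :=
    exists_subseq_tendsto_of_eVariationOn_le A₁ hbdd ENNReal.ofReal_ne_top hvar
  choose! g hg using hconv
  exact ⟨φ, hφ, g, hg⟩
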